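/- arXiv:2011.05944 — 10 statements merged into one kernel-verified Lean document; each statement's English description precedes it below -/
import Mathlib

section
/- Let $0 < \Delta_1 \leq \Delta_2$ and $0 \leq I_1 < I_2$ be reals, and define $\Psi(p) = ((1-p)\Delta_1 + p\Delta_2)^2 / ((1-p)I_1 + pI_2)$ for $p \in [0,1]$ (assuming the denominator is positive on $[0,1]$). Then $p^* = \mathrm{clip}_{[0,1]}\big(\Delta_1/(\Delta_2 - \Delta_1) - 2I_1/(I_2 - I_1)\big)$ minimizes $\Psi$ over $[0,1]$, with the convention $\Delta_1/0 = \infty$. -/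
/-!
Write `Ψ = L ^ 2 / D` with `L`, `D` affine in `p` and `D > 0`. For every `c`,
`L ^ 2 / D ≥ 2 c L - c ^ 2 D`, with equality where `c = L / D`. Taking `c = L q / D q`, the
right-hand side is an affine minorant of `Ψ` touching it at `q`, with slope
`c (2 (Δ₂ - Δ₁) - c (I₂ - I₁))`; so `q` minimises `Ψ` on `[0, 1]` as soon as this minorant does.
The clipped formula for `p*` is the case analysis on that slope: nonnegative at `p* = 0`,
nonpositive at `p* = 1`, zero at an interior `p*`.
-/
open Set

lemma two_mul_sub_sq_mul_le_sq_div {x y : ℝ} (c : ℝ) (hy : 0 < y) :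
    2 * c * x - c ^ 2 * y ≤ x ^ 2 / y := by
  rw [le_div_iff₀ hy]
  nlinarith [sq_nonneg (x - c * y)]

lemma sq_div_eq_two_mul_sub_sq_mul {x y c : ℝ} (hy : 0 < y) (hc : c * y = x) :
    x ^ 2 / y = 2 * c * x - c ^ 2 * y := by
  rw [← hc]
  field_simp
  ring

section InfoRatio

variable (Δ₁ Δ₂ I₁ I₂ : ℝ)

noncomputable def infoRatio (p : ℝ) : ℝ :=
  ((1 - p) * Δ₁ + p * Δ₂) ^ 2 / ((1 - p) * I₁ + p * I₂)

variable {Δ₁ Δ₂ I₁ I₂}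

lemma infoRatio_le_of_slope {q p c : ℝ} (hDq : 0 < (1 - q) * I₁ + q * I₂)
    (hDp : 0 < (1 - p) * I₁ + p * I₂) (hc : c * ((1 - q) * I₁ + q * I₂) = (1 - q) * Δ₁ + q * Δ₂)
    (hslope : 0 ≤ (p - q) * (c * (2 * (Δ₂ - Δ₁) - c * (I₂ - I₁)))) :
    infoRatio Δ₁ Δ₂ I₁ I₂ q ≤ infoRatio Δ₁ Δ₂ I₁ I₂ p := by
  unfold infoRatio
  rw [sq_div_eq_two_mul_sub_sq_mul hDq hc]
  refine le_trans ?_ (two_mul_sub_sq_mul_le_sq_div c hDp)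
  nlinarith

lemma infoRatio_zero_le {p : ℝ} (hp : 0 ≤ p) (hΔ₁ : 0 ≤ Δ₁) (hI₁ : 0 < I₁)
    (hDp : 0 < (1 - p) * I₁ + p * I₂) (h : (I₂ - I₁) * Δ₁ ≤ 2 * (Δ₂ - Δ₁) * I₁) :
    infoRatio Δ₁ Δ₂ I₁ I₂ 0 ≤ infoRatio Δ₁ Δ₂ I₁ I₂ p := by
  have hc : Δ₁ / I₁ * I₁ = Δ₁ := div_mul_cancel₀ _ hI₁.ne'
  refine infoRatio_le_of_slope (c := Δ₁ / I₁) (by simpa using hI₁) hDp (by simpa using hc) ?_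
  have hslope : 0 ≤ 2 * (Δ₂ - Δ₁) - Δ₁ / I₁ * (I₂ - I₁) := by
    rw [div_mul_eq_mul_div, sub_nonneg, div_le_iff₀ hI₁]
    linarith
  rw [sub_zero]
  exact mul_nonneg hp (mul_nonneg (div_nonneg hΔ₁ hI₁.le) hslope)

lemma infoRatio_one_le {p : ℝ} (hp : p ≤ 1) (hΔ₂ : 0 ≤ Δ₂) (hI₂ : 0 < I₂)
    (hDp : 0 < (1 - p) * I₁ + p * I₂) (h : 2 * (Δ₂ - Δ₁) * I₂ ≤ (I₂ - I₁) * Δ₂) :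
    infoRatio Δ₁ Δ₂ I₁ I₂ 1 ≤ infoRatio Δ₁ Δ₂ I₁ I₂ p := by
  have hc : Δ₂ / I₂ * I₂ = Δ₂ := div_mul_cancel₀ _ hI₂.ne'
  refine infoRatio_le_of_slope (c := Δ₂ / I₂) (by simpa using hI₂) hDp (by simpa using hc) ?_
  have hslope : 2 * (Δ₂ - Δ₁) - Δ₂ / I₂ * (I₂ - I₁) ≤ 0 := by
    rw [div_mul_eq_mul_div, sub_nonpos, le_div_iff₀ hI₂]
    linarith
  exact mul_nonneg_of_nonpos_of_nonpos (by linarith)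
    (mul_nonpos_of_nonneg_of_nonpos (div_nonneg hΔ₂ hI₂.le) hslope)

-- `hq` is the stationarity condition `Ψ' q = 0`.
lemma infoRatio_le_of_stationary {q p : ℝ} (hDq : 0 < (1 - q) * I₁ + q * I₂)
    (hDp : 0 < (1 - p) * I₁ + p * I₂)
    (hq : (I₂ - I₁) * ((1 - q) * Δ₁ + q * Δ₂) = 2 * (Δ₂ - Δ₁) * ((1 - q) * I₁ + q * I₂)) :
    infoRatio Δ₁ Δ₂ I₁ I₂ q ≤ infoRatio Δ₁ Δ₂ I₁ I₂ p := by
  set c := ((1 - q) * Δ₁ + q * Δ₂) / ((1 - q) * I₁ + q * I₂)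
  have hc : c * ((1 - q) * I₁ + q * I₂) = (1 - q) * Δ₁ + q * Δ₂ := div_mul_cancel₀ _ hDq.ne'
  have hslope : 2 * (Δ₂ - Δ₁) - c * (I₂ - I₁) = 0 := by
    refine (mul_eq_zero.mp (?_ : _ * ((1 - q) * I₁ + q * I₂) = 0)).resolve_right hDq.ne'
    linear_combination -(I₂ - I₁) * hc - hq
  exact infoRatio_le_of_slope hDq hDp hc (by rw [hslope]; simp)

end InfoRatio

theorem two_action_ids_optimal_prob_general (Δ₁ Δ₂ I₁ I₂ : ℝ)
    (hΔ₁ : 0 < Δ₁) (hΔ : Δ₁ ≤ Δ₂) (hI : I₁ < I₂)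
    (Ψ : ℝ → ℝ)
    (hΨ : ∀ p, Ψ p = ((1 - p) * Δ₁ + p * Δ₂)^2 / ((1 - p) * I₁ + p * I₂))
    (hden : ∀ p ∈ Set.Icc (0:ℝ) 1, 0 < (1 - p) * I₁ + p * I₂)
    (pstar : ℝ)
    (hp : pstar = if Δ₁ = Δ₂ then 1
      else max 0 (min 1 (Δ₁ / (Δ₂ - Δ₁) - 2 * I₁ / (I₂ - I₁)))) :
    pstar ∈ Set.Icc (0:ℝ) 1 ∧ ∀ p ∈ Set.Icc (0:ℝ) 1, Ψ pstar ≤ Ψ p := by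
  obtain rfl : Ψ = infoRatio Δ₁ Δ₂ I₁ I₂ := funext hΨ
  have hmem : pstar ∈ Icc (0:ℝ) 1 := by
    rw [hp]
    split_ifs
    exacts [right_mem_Icc.mpr zero_le_one, ⟨le_max_left _ _, max_le zero_le_one (min_le_left _ _)⟩]
  refine ⟨hmem, fun p hpI => ?_⟩
  have hD₀ := hden 0 (left_mem_Icc.mpr zero_le_one)
  have hD₁ := hden 1 (right_mem_Icc.mpr zero_le_one)
  norm_num at hD₀ hD₁
  rcases hΔ.eq_or_lt with hE | hlt
  · rw [hp, if_pos hE]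
    exact infoRatio_one_le hpI.2 (by linarith) hD₁ (hden p hpI) (by nlinarith)
  set t := Δ₁ / (Δ₂ - Δ₁) - 2 * I₁ / (I₂ - I₁) with ht
  have ha : 0 < Δ₂ - Δ₁ := sub_pos.mpr hlt
  have hb : 0 < I₂ - I₁ := sub_pos.mpr hI
  have hkey : (Δ₂ - Δ₁) * (I₂ - I₁) * t = (I₂ - I₁) * Δ₁ - 2 * (Δ₂ - Δ₁) * I₁ := by
    rw [ht]; field_simp
  rw [hp, if_neg hlt.ne] at hmem ⊢
  rcases le_or_gt t 0 with h0 | h0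
  · rw [max_eq_left ((min_le_right _ _).trans h0)]
    exact infoRatio_zero_le hpI.1 hΔ₁.le hD₀ (hden p hpI) (by nlinarith [mul_pos ha hb])
  rcases le_or_gt 1 t with h1 | h1
  · rw [min_eq_left h1, max_eq_right zero_le_one]
    exact infoRatio_one_le hpI.2 (by linarith) hD₁ (hden p hpI) (by nlinarith [mul_pos ha hb])
  · rw [min_eq_right h1.le, max_eq_right h0.le] at hmem ⊢
    exact infoRatio_le_of_stationary (hden t hmem) (hden p hpI) (by linear_combination -hkey)

theorem two_action_ids_optimal_prob (Δ₁ Δ₂ I₁ I₂ : ℝ)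
    (hΔ₁ : 0 < Δ₁) (hΔ : Δ₁ ≤ Δ₂) (hI₁ : 0 ≤ I₁) (hI : I₁ < I₂)
    (Ψ : ℝ → ℝ)
    (hΨ : ∀ p, Ψ p = ((1 - p) * Δ₁ + p * Δ₂)^2 / ((1 - p) * I₁ + p * I₂))
    (hden : ∀ p ∈ Set.Icc (0:ℝ) 1, 0 < (1 - p) * I₁ + p * I₂)
    (pstar : ℝ)
    (hp : pstar = if Δ₁ = Δ₂ then 1
      else max 0 (min 1 (Δ₁ / (Δ₂ - Δ₁) - 2 * I₁ / (I₂ - I₁)))) :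
    pstar ∈ Set.Icc (0:ℝ) 1 ∧ ∀ p ∈ Set.Icc (0:ℝ) 1, Ψ pstar ≤ Ψ p :=
  two_action_ids_optimal_prob_general Δ₁ Δ₂ I₁ I₂ hΔ₁ hΔ hI Ψ hΨ hden pstar hp
end

section
/- Let $\hat\Delta, I \in \mathbb{R}_{\geq 0}^k$ and consider minimizing $\Psi(\mu) = \hat\Delta(\mu)^2/I(\mu)$ over probability distributions $\mu$ on $[k]$ with $I(\mu)>0$. If a minimizer exists, then there exists a minimizer supported on at most two indices. -/
/-!
A minimizer stays a minimizer if we keep the numerator `∑ μ Δ` and total mass fixed and do not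
decrease the denominator `∑ μ I`. On a support of at least three points, the two constraints
`∑ d = 0`, `∑ d Δ = 0` leave a nonzero direction `d`; after fixing its sign so that `∑ d I` does
not decrease, moving along `d` until the first coordinate hits zero shrinks the support. This is
the basic-feasible-solution argument of linear programming, and it works for any
finite-dimensional family of linear constraints.
-/

open Finset Function Module

section

variable {ι K V : Type*} [Fintype ι] [Field K] [AddCommGroup V] [Module K V]

theorem exists_ne_zero_support_subset_mem_ker [FiniteDimensional K V]
    (A : (ι → K) →ₗ[K] V) (s : Set ι) (hs : finrank K V < s.ncard) :
    ∃ d : ι → K, d ≠ 0 ∧ support d ⊆ s ∧ A d = 0 := by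
  classical
  let E := ExtendByZero.linearMap K (Subtype.val : s → ι)
  have hdim : finrank K V < finrank K (s → K) := by
    rwa [finrank_fintype_fun_eq_card, Fintype.card_eq_nat_card, Nat.card_coe_set_eq]
  obtain ⟨d, hd, hd0⟩ :=
    (Submodule.ne_bot_iff _).1 (LinearMap.ker_ne_bot_of_finrank_lt (f := A ∘ₗ E) hdim)
  refine ⟨E d, fun h => hd0 ?_, fun x hx => ?_, hd⟩
  · exact extend_injective Subtype.val_injective (0 : ι → K) (h.trans (map_zero E).symm)
  · by_contra hxs
    exact hx (extend_apply' _ _ _ fun ⟨y, hy⟩ => hxs (hy ▸ y.2))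

variable [LinearOrder K] [IsStrictOrderedRing K]

theorem exists_nonneg_add_smul_eq_zero {μ d : ι → K} (hμ : 0 ≤ μ) (hd : ∃ x, d x < 0) :
    ∃ t : K, 0 ≤ t ∧ 0 ≤ μ + t • d ∧ ∃ x, d x < 0 ∧ μ x + t * d x = 0 := by
  classical
  obtain ⟨x₀, hx₀, hmin⟩ := (univ.filter (d · < 0)).exists_min_image (fun x => μ x / -d x)
    (by simpa [Finset.Nonempty] using hd)
  have hdx₀ : 0 < -d x₀ := neg_pos.2 (mem_filter.1 hx₀).2
  have ht : 0 ≤ μ x₀ / -d x₀ := div_nonneg (hμ x₀) hdx₀.le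
  refine ⟨μ x₀ / -d x₀, ht, fun x => ?_, x₀, neg_pos.1 hdx₀, by
    rw [div_neg, neg_mul, div_mul_cancel₀ _ (neg_ne_zero.1 hdx₀.ne'), add_neg_cancel]⟩
  simp only [Pi.zero_apply, Pi.add_apply, Pi.smul_apply, smul_eq_mul]
  rcases lt_or_ge (d x) 0 with hx | hx
  · have := (le_div_iff₀ (neg_pos.2 hx)).1 (hmin x (by simpa using hx))
    linarith
  · exact add_nonneg (hμ x) (mul_nonneg ht hx)

theorem exists_support_ssubset_of_mem_ker (A : (ι → K) →ₗ[K] V) (f : (ι → K) →ₗ[K] K)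
    {μ d : ι → K} (hμ : 0 ≤ μ) (hd : d ≠ 0) (hdμ : support d ⊆ support μ)
    (hsum : ∑ x, d x = 0) (hA : A d = 0) (hf : 0 ≤ f d) :
    ∃ ν, 0 ≤ ν ∧ ∑ x, ν x = ∑ x, μ x ∧ A ν = A μ ∧ f μ ≤ f ν ∧ support ν ⊂ support μ := by
  have hneg : ∃ x, d x < 0 := by
    by_contra! h
    exact hd ((Fintype.sum_eq_zero_iff_of_nonneg h).1 hsum)
  obtain ⟨t, ht, hν, x₀, hdx₀, hνx₀⟩ := exists_nonneg_add_smul_eq_zero hμ hneg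
  refine ⟨μ + t • d, hν, ?_, by simp [hA], by simpa using mul_nonneg ht hf, ?_⟩
  · simp [sum_add_distrib, ← mul_sum, hsum]
  · refine (Set.ssubset_iff_of_subset fun x hx => ?_).2
      ⟨x₀, hdμ hdx₀.ne, by simpa using hνx₀⟩
    by_contra hμx
    have hdx : d x = 0 := notMem_support.1 (mt (@hdμ x) hμx)
    exact hx (by simp [notMem_support.1 hμx, hdx])

theorem exists_support_ssubset [FiniteDimensional K V] (A : (ι → K) →ₗ[K] V)
    (f : (ι → K) →ₗ[K] K) {μ : ι → K} (hμ : 0 ≤ μ)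
    (hcard : finrank K V + 1 < (support μ).ncard) :
    ∃ ν, 0 ≤ ν ∧ ∑ x, ν x = ∑ x, μ x ∧ A ν = A μ ∧ f μ ≤ f ν ∧ support ν ⊂ support μ := by
  obtain ⟨d, hd, hdμ, hker⟩ := exists_ne_zero_support_subset_mem_ker
    ((Fintype.linearCombination K fun _ => (1 : K)).prod A) (support μ)
    (by rwa [finrank_prod, finrank_self, add_comm])
  simp only [LinearMap.prod_apply, Function.prod_apply, Prod.mk_eq_zero,
    Fintype.linearCombination_apply, smul_eq_mul, mul_one] at hker
  obtain ⟨hsum, hA⟩ := hker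
  rcases le_total 0 (f d) with hf | hf
  · exact exists_support_ssubset_of_mem_ker A f hμ hd hdμ hsum hA hf
  · exact exists_support_ssubset_of_mem_ker A f hμ (neg_ne_zero.2 hd) (by rwa [support_neg])
      (by simp [hsum]) (by simp [hA]) (by simpa using hf)

theorem exists_nonneg_support_ncard_le [FiniteDimensional K V] (A : (ι → K) →ₗ[K] V)
    (f : (ι → K) →ₗ[K] K) {μ : ι → K} (hμ : 0 ≤ μ) :
    ∃ ν, 0 ≤ ν ∧ ∑ x, ν x = ∑ x, μ x ∧ A ν = A μ ∧ f μ ≤ f ν ∧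
      (support ν).ncard ≤ finrank K V + 1 := by
  induction hs : support μ using WellFoundedLT.induction generalizing μ with
  | _ _ ih =>
  by_cases hcard : (support μ).ncard ≤ finrank K V + 1
  · exact ⟨μ, hμ, rfl, rfl, le_rfl, hcard⟩
  obtain ⟨ν, hν, hνsum, hνA, hνf, hνμ⟩ := exists_support_ssubset A f hμ (not_le.1 hcard)
  obtain ⟨ρ, hρ, hρsum, hρA, hρf, hρcard⟩ := ih _ (hs ▸ hνμ) hν rfl
  exact ⟨ρ, hρ, hρsum.trans hνsum, hρA.trans hνA, hνf.trans hρf, hρcard⟩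

end

theorem Set.exists_subset_pair_of_ncard_le_two {α : Type*} {s : Set α} (hs : s.Finite)
    (hne : s.Nonempty) (h : s.ncard ≤ 2) : ∃ a b, s ⊆ {a, b} := by
  have := (Set.ncard_pos hs).2 hne
  interval_cases hn : s.ncard
  · obtain ⟨a, rfl⟩ := Set.ncard_eq_one.1 hn
    exact ⟨a, a, by simp⟩
  · obtain ⟨a, b, -, rfl⟩ := Set.ncard_eq_two.1 hn
    exact ⟨a, b, subset_rfl⟩

theorem ids_two_action_support_general (k : ℕ) (Δ I : Fin k → ℝ)
    (Ψ : (Fin k → ℝ) → ℝ)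
    (hΨ : ∀ μ, Ψ μ = (∑ x, μ x * Δ x)^2 / (∑ x, μ x * I x))
    (μstar : Fin k → ℝ) (hpos : ∀ x, 0 ≤ μstar x) (hsum : (∑ x, μstar x) = 1)
    (hIpos : 0 < ∑ x, μstar x * I x)
    (hmin : ∀ ν : Fin k → ℝ, (∀ x, 0 ≤ ν x) → (∑ x, ν x) = 1 →
      0 < (∑ x, ν x * I x) → Ψ μstar ≤ Ψ ν) :
    ∃ ν : Fin k → ℝ, (∀ x, 0 ≤ ν x) ∧ (∑ x, ν x) = 1 ∧
      0 < (∑ x, ν x * I x) ∧ Ψ ν = Ψ μstar ∧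
      ∃ a b : Fin k, ∀ x, ν x ≠ 0 → x = a ∨ x = b := by
  obtain ⟨ν, hν, hνsum, hνΔ, hνI, hνcard⟩ := exists_nonneg_support_ncard_le
    (Fintype.linearCombination ℝ Δ) (Fintype.linearCombination ℝ I) (μ := μstar) hpos
  simp only [Fintype.linearCombination_apply, smul_eq_mul, finrank_self] at hνΔ hνI hνcard
  rw [hsum] at hνsum
  have hνIpos : 0 < ∑ x, ν x * I x := hIpos.trans_le hνI
  have hΨν : Ψ ν ≤ Ψ μstar := by
    rw [hΨ, hΨ, hνΔ]
    exact div_le_div_of_nonneg_left (sq_nonneg _) hIpos hνI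
  have hνne : (support ν).Nonempty := support_nonempty_iff.2 (by rintro rfl; simp at hνsum)
  exact ⟨ν, hν, hνsum, hνIpos, hΨν.antisymm (hmin ν hν hνsum hνIpos),
    Set.exists_subset_pair_of_ncard_le_two (Set.toFinite _) hνne hνcard⟩

theorem ids_two_action_support (k : ℕ) (Δ I : Fin k → ℝ)
    (hΔ : ∀ x, 0 ≤ Δ x) (hI : ∀ x, 0 ≤ I x)
    (Ψ : (Fin k → ℝ) → ℝ)
    (hΨ : ∀ μ, Ψ μ = (∑ x, μ x * Δ x)^2 / (∑ x, μ x * I x))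
    (μstar : Fin k → ℝ) (hpos : ∀ x, 0 ≤ μstar x) (hsum : (∑ x, μstar x) = 1)
    (hIpos : 0 < ∑ x, μstar x * I x)
    (hmin : ∀ ν : Fin k → ℝ, (∀ x, 0 ≤ ν x) → (∑ x, ν x) = 1 →
      0 < (∑ x, ν x * I x) → Ψ μstar ≤ Ψ ν) :
    ∃ ν : Fin k → ℝ, (∀ x, 0 ≤ ν x) ∧ (∑ x, ν x) = 1 ∧
      0 < (∑ x, ν x * I x) ∧ Ψ ν = Ψ μstar ∧
      ∃ a b : Fin k, ∀ x, ν x ≠ 0 → x = a ∨ x = b :=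
  ids_two_action_support_general k Δ I Ψ hΨ μstar hpos hsum hIpos hmin
end

section
/- Let $\mu^*$ minimize $\Psi(\mu) = \hat\Delta(\mu)^2/I(\mu)$ over the probability simplex, with $\Psi^* = \Psi(\mu^*)$, $\hat\Delta(\mu^*) > 0$ and $I(\mu^*) > 0$. Define $g(x) = \hat\Delta(x) - \frac{\Psi^*}{2\hat\Delta(\mu^*)} I(x)$. Then every $x$ in the support of $\mu^*$ satisfies $g(x) = \min_z g(z)$, and moreover $g(x) = \frac{1}{2}\hat\Delta(\mu^*)$ for all $x \in \mathrm{supp}(\mu^*)$. -/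
/-!
Moving a small mass `t` from a support point `x` of `μ*` to any action `z` keeps `μ*` in the
simplex and changes `Δ̂(μ)` and `I(μ)` linearly in `t`. Since `Ψ* I(ν) ≤ Δ̂(ν)²` on the simplex
wherever `I(ν) > 0`, with equality at `μ*`, the first-order term of this perturbation must be
nonnegative; it is `2 Δ̂(μ*) (g z - g x)`. So `g` is minimal on the support of `μ*`, hence
constant there and equal to its `μ*`-average `Δ̂(μ*) - Ψ* I(μ*) / (2 Δ̂(μ*)) = Δ̂(μ*) / 2`.
-/

open Filter Topology

lemma nonneg_of_eventually_nonneg_add_mul {L c : ℝ}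
    (h : ∀ᶠ t in 𝓝[>] 0, 0 ≤ L + t * c) : 0 ≤ L := by
  have hlim : Tendsto (fun t : ℝ => L + t * c) (𝓝[>] 0) (𝓝 L) := by
    have : Continuous fun t : ℝ => L + t * c := by fun_prop
    simpa using (this.tendsto 0).mono_left nhdsWithin_le_nhds
  exact ge_of_tendsto hlim h

lemma eq_dotProduct_of_forall_le_on_support {ι : Type*} [Fintype ι] {μ g : ι → ℝ}
    (hsum : ∑ y, μ y = 1) (hmin : ∀ x, μ x ≠ 0 → ∀ z, g x ≤ g z) {x : ι} (hx : μ x ≠ 0) :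
    g x = μ ⬝ᵥ g := by
  have hterm : ∀ y, μ y * g y = μ y * g x := by
    intro y
    by_cases hy : μ y = 0
    · simp [hy]
    · rw [le_antisymm (hmin y hy x) (hmin x hx y)]
  simp only [dotProduct, hterm, ← Finset.sum_mul, hsum, one_mul]

section

variable {ι : Type*} [DecidableEq ι]

def transferMass (μ : ι → ℝ) (x z : ι) (t : ℝ) : ι → ℝ :=
  μ + t • (Pi.single z 1 - Pi.single x 1)

lemma transferMass_nonneg {μ : ι → ℝ} (hμ : ∀ y, 0 ≤ μ y) {x z : ι} {t : ℝ}
    (ht₀ : 0 ≤ t) (ht : t ≤ μ x) (y : ι) : 0 ≤ transferMass μ x z t y := by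
  simp only [transferMass, Pi.add_apply, Pi.smul_apply, Pi.sub_apply, Pi.single_apply,
    smul_eq_mul]
  split_ifs with hz hx hx
  · simp [hμ y]
  · linarith [hμ y]
  · subst hx; linarith
  · simp [hμ y]

variable [Fintype ι]

lemma transferMass_dotProduct (μ f : ι → ℝ) (x z : ι) (t : ℝ) :
    transferMass μ x z t ⬝ᵥ f = μ ⬝ᵥ f + t * (f z - f x) := by
  simp [transferMass, add_dotProduct, smul_dotProduct, sub_dotProduct]

lemma sum_transferMass (μ : ι → ℝ) (x z : ι) (t : ℝ) :
    ∑ y, transferMass μ x z t y = ∑ y, μ y := by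
  simpa [dotProduct_one] using transferMass_dotProduct μ 1 x z t

lemma ratio_minimizer_linearization_le {μ Δ I : ι → ℝ} {ψ : ℝ} (hμ : ∀ y, 0 ≤ μ y)
    (hD : 0 < μ ⬝ᵥ Δ) (hJ : 0 < μ ⬝ᵥ I) (hψ : ψ * (μ ⬝ᵥ I) = (μ ⬝ᵥ Δ) ^ 2)
    (hmin : ∀ ν : ι → ℝ, (∀ y, 0 ≤ ν y) → ∑ y, ν y = ∑ y, μ y → 0 < ν ⬝ᵥ I →
      ψ * (ν ⬝ᵥ I) ≤ (ν ⬝ᵥ Δ) ^ 2)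
    {x : ι} (hx : 0 < μ x) (z : ι) :
    Δ x - ψ / (2 * (μ ⬝ᵥ Δ)) * I x ≤ Δ z - ψ / (2 * (μ ⬝ᵥ Δ)) * I z := by
  set D := μ ⬝ᵥ Δ
  set J := μ ⬝ᵥ I
  set a := Δ z - Δ x
  set b := I z - I x
  have hJ_near : ∀ᶠ t in 𝓝 (0 : ℝ), 0 < J + t * b := by
    have : Continuous fun t : ℝ => J + t * b := by fun_prop
    exact (this.tendsto 0).eventually (lt_mem_nhds (by simpa using hJ))
  have hfirst : ∀ᶠ t in 𝓝[>] 0, 0 ≤ (2 * D * a - ψ * b) + t * a ^ 2 := by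
    filter_upwards [self_mem_nhdsWithin, nhdsWithin_le_nhds (Iio_mem_nhds hx),
      nhdsWithin_le_nhds hJ_near] with t (ht₀ : 0 < t) (htx : t < μ x) htJ
    have hν := hmin (transferMass μ x z t) (transferMass_nonneg hμ ht₀.le htx.le)
      (sum_transferMass μ x z t) (by rwa [transferMass_dotProduct])
    rw [transferMass_dotProduct, transferMass_dotProduct] at hν
    -- `hν` minus `hψ` is `t * (first-order term + t * a²) ≥ 0`
    have : 0 ≤ t * ((2 * D * a - ψ * b) + t * a ^ 2) := by nlinarith
    exact nonneg_of_mul_nonneg_right this ht₀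
  have hslope := nonneg_of_eventually_nonneg_add_mul hfirst
  have : ψ / (2 * D) * b ≤ a := by
    rw [div_mul_eq_mul_div, div_le_iff₀ (by positivity)]
    linarith
  linarith

end

theorem ids_support_characterization_general (k : ℕ) (Δ I : Fin k → ℝ)
    (Ψ : (Fin k → ℝ) → ℝ)
    (hΨ : ∀ μ, Ψ μ = (∑ x, μ x * Δ x)^2 / (∑ x, μ x * I x))
    (μstar : Fin k → ℝ) (hpos : ∀ x, 0 ≤ μstar x) (hsum : (∑ x, μstar x) = 1)
    (hΔpos : 0 < ∑ x, μstar x * Δ x)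
    (hIpos : 0 < ∑ x, μstar x * I x)
    (hmin : ∀ ν : Fin k → ℝ, (∀ x, 0 ≤ ν x) → (∑ x, ν x) = 1 →
      0 < (∑ x, ν x * I x) → Ψ μstar ≤ Ψ ν)
    (g : Fin k → ℝ)
    (hg : ∀ x, g x = Δ x - (Ψ μstar / (2 * ∑ y, μstar y * Δ y)) * I x) :
    ∀ x, μstar x ≠ 0 →
      (∀ z, g x ≤ g z) ∧ g x = (∑ y, μstar y * Δ y) / 2 := by
  have hψ : Ψ μstar * (μstar ⬝ᵥ I) = (μstar ⬝ᵥ Δ) ^ 2 := by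
    rw [hΨ]; exact div_mul_cancel₀ _ hIpos.ne'
  have hmin' : ∀ ν : Fin k → ℝ, (∀ y, 0 ≤ ν y) → ∑ y, ν y = ∑ y, μstar y → 0 < ν ⬝ᵥ I →
      Ψ μstar * (ν ⬝ᵥ I) ≤ (ν ⬝ᵥ Δ) ^ 2 := fun ν hν hνsum hνI =>
    (le_div_iff₀ hνI).mp ((hmin ν hν (hνsum.trans hsum) hνI).trans_eq (hΨ ν))
  have hgmin : ∀ x, μstar x ≠ 0 → ∀ z, g x ≤ g z := fun x hx z => by
    rw [hg, hg]
    exact ratio_minimizer_linearization_le hpos hΔpos hIpos hψ hmin' ((hpos x).lt_of_ne' hx) z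
  have havg : μstar ⬝ᵥ g = (μstar ⬝ᵥ Δ) / 2 := by
    have hg' : g = Δ - (Ψ μstar / (2 * (μstar ⬝ᵥ Δ))) • I := funext hg
    rw [hg', dotProduct_sub, dotProduct_smul, smul_eq_mul, div_mul_eq_mul_div, hψ]
    field_simp [hΔpos.ne']
    ring
  exact fun x hx => ⟨hgmin x hx, (eq_dotProduct_of_forall_le_on_support hsum hgmin hx).trans havg⟩

theorem ids_support_characterization (k : ℕ) (Δ I : Fin k → ℝ)
    (hΔ : ∀ x, 0 ≤ Δ x) (hI : ∀ x, 0 ≤ I x)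
    (Ψ : (Fin k → ℝ) → ℝ)
    (hΨ : ∀ μ, Ψ μ = (∑ x, μ x * Δ x)^2 / (∑ x, μ x * I x))
    (μstar : Fin k → ℝ) (hpos : ∀ x, 0 ≤ μstar x) (hsum : (∑ x, μstar x) = 1)
    (hΔpos : 0 < ∑ x, μstar x * Δ x)
    (hIpos : 0 < ∑ x, μstar x * I x)
    (hmin : ∀ ν : Fin k → ℝ, (∀ x, 0 ≤ ν x) → (∑ x, ν x) = 1 →
      0 < (∑ x, ν x * I x) → Ψ μstar ≤ Ψ ν)
    (g : Fin k → ℝ)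
    (hg : ∀ x, g x = Δ x - (Ψ μstar / (2 * ∑ y, μstar y * Δ y)) * I x) :
    ∀ x, μstar x ≠ 0 →
      (∀ z, g x ≤ g z) ∧ g x = (∑ y, μstar y * Δ y) / 2 :=
  ids_support_characterization_general k Δ I Ψ hΨ μstar hpos hsum hΔpos hIpos hmin g hg
end

section
/- Let $x_1, \dots, x_n \in \mathbb{R}^d$ with $\|x_s\|_2 \leq 1$, and define $V_s = \mathbf{1}_d + \sum_{i<s} x_i x_i^\top$. Then $\sum_{s=1}^n \|x_s\|^2_{V_s^{-1}} \leq 2\log\det(V_{n+1}) \leq 2d\log\big(\tfrac{n+d}{d}\big)$. -/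
/-!
By the matrix determinant lemma, `det V_{s+1} = det V_s · (1 + ‖x_s‖²_{V_s⁻¹})`, so `log det V_{n+1}`
telescopes to `∑ log (1 + ‖x_s‖²_{V_s⁻¹})`. Since `V_s ≥ 1`, each `‖x_s‖²_{V_s⁻¹} ≤ ‖x_s‖² ≤ 1`, and
`u ≤ 2 log (1 + u)` on `[0, 1]` gives the first inequality. For the second, AM-GM on the eigenvalues
gives `det V ≤ (tr V / d)^d`, and `tr V_{n+1} = d + ∑ ‖x_s‖² ≤ d + n`.
-/

open Matrix Finset

theorem Real.prod_le_sum_div_card_pow {ι : Type*} (s : Finset ι) {z : ι → ℝ}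
    (hz : ∀ i ∈ s, 0 ≤ z i) : ∏ i ∈ s, z i ≤ ((∑ i ∈ s, z i) / #s) ^ #s := by
  rcases s.eq_empty_or_nonempty with rfl | hs
  · simp
  have hcard : #s ≠ 0 := hs.card_pos.ne'
  have amgm := Real.geom_mean_le_arith_mean_weighted s (fun _ ↦ (#s : ℝ)⁻¹) z
    (fun _ _ ↦ by positivity) (by simp [hcard]) hz
  rw [← mul_sum, Real.finsetProd_rpow s z hz, inv_mul_eq_div] at amgm
  have hprod := prod_nonneg hz
  calc ∏ i ∈ s, z i = ((∏ i ∈ s, z i) ^ (#s : ℝ)⁻¹) ^ #s :=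
        (Real.rpow_inv_natCast_pow hprod hcard).symm
    _ ≤ _ := by gcongr

theorem Real.le_two_mul_log_one_add {u : ℝ} (h0 : 0 ≤ u) (h1 : u ≤ 1) :
    u ≤ 2 * Real.log (1 + u) := by
  have hlog := Real.one_sub_inv_le_log_of_pos (by linarith : 0 < 1 + u)
  have hdiv : u / (1 + u) = 1 - (1 + u)⁻¹ := by field_simp; ring
  have hhalf : u / 2 ≤ u / (1 + u) := div_le_div_of_nonneg_left h0 (by linarith) (by linarith)
  linarith

namespace Matrix

section

variable {ι : Type*} [Fintype ι]

theorem posSemidef_sum_vecMulVec {κ : Type*} (s : Finset κ) (x : κ → ι → ℝ) :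
    (∑ i ∈ s, vecMulVec (x i) (x i)).PosSemidef :=
  posSemidef_sum s fun i _ ↦ by simpa using posSemidef_vecMulVec_self_star (x i)

variable [DecidableEq ι]

theorem PosSemidef.det_le_trace_div_card_pow {A : Matrix ι ι ℝ} (hA : A.PosSemidef) :
    A.det ≤ (A.trace / Fintype.card ι) ^ Fintype.card ι := by
  rw [hA.isHermitian.det_eq_prod_eigenvalues, hA.isHermitian.trace_eq_sum_eigenvalues]
  simpa using Real.prod_le_sum_div_card_pow univ fun i _ ↦ hA.eigenvalues_nonneg i

theorem det_add_vecMulVec {R : Type*} [CommRing R] {A : Matrix ι ι R} (hA : IsUnit A.det)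
    (u v : ι → R) : (A + vecMulVec u v).det = A.det * (1 + v ⬝ᵥ A⁻¹ *ᵥ u) := by
  rw [vecMulVec_eq Unit, det_add_replicateCol_mul_replicateRow hA, ← replicateRow_vecMul,
    det_unique (1 + _)]
  simp [replicateRow_mul_replicateCol_apply, ← dotProduct_mulVec]

theorem dotProduct_inv_one_add_mulVec_le {S : Matrix ι ι ℝ} (hS : S.PosSemidef) (v : ι → ℝ) :
    v ⬝ᵥ (1 + S)⁻¹ *ᵥ v ≤ v ⬝ᵥ v := by
  have hunit : IsUnit (1 + S).det := (PosDef.one.add_posSemidef hS).det_pos.ne'.isUnit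
  set y := (1 + S)⁻¹ *ᵥ v
  have hv : v = (1 + S) *ᵥ y := by rw [mulVec_mulVec, mul_nonsing_inv _ hunit, one_mulVec]
  rw [add_mulVec, one_mulVec] at hv
  have hSy : 0 ≤ y ⬝ᵥ S *ᵥ y := by simpa using hS.dotProduct_mulVec_nonneg y
  have hSySy : 0 ≤ S *ᵥ y ⬝ᵥ S *ᵥ y := by simpa using dotProduct_self_star_nonneg (S *ᵥ y)
  rw [hv]
  simp only [add_dotProduct, dotProduct_add, dotProduct_comm (S *ᵥ y) y]
  linarith

end

section

variable {ι : Type*} [DecidableEq ι]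

noncomputable def designMatrix (x : ℕ → ι → ℝ) (s : ℕ) : Matrix ι ι ℝ :=
  1 + ∑ i ∈ range s, vecMulVec (x i) (x i)

variable (x : ℕ → ι → ℝ)

theorem designMatrix_succ (s : ℕ) :
    designMatrix x (s + 1) = designMatrix x s + vecMulVec (x s) (x s) := by
  simp only [designMatrix, sum_range_succ, add_assoc]

variable [Fintype ι]

theorem posDef_designMatrix (s : ℕ) : (designMatrix x s).PosDef :=
  PosDef.one.add_posSemidef (posSemidef_sum_vecMulVec (range s) x)

theorem dotProduct_designMatrix_inv_mulVec_nonneg (s : ℕ) (v : ι → ℝ) :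
    0 ≤ v ⬝ᵥ (designMatrix x s)⁻¹ *ᵥ v := by
  simpa using (posDef_designMatrix x s).inv.posSemidef.dotProduct_mulVec_nonneg v

theorem dotProduct_designMatrix_inv_mulVec_le (s : ℕ) (v : ι → ℝ) :
    v ⬝ᵥ (designMatrix x s)⁻¹ *ᵥ v ≤ v ⬝ᵥ v :=
  dotProduct_inv_one_add_mulVec_le (posSemidef_sum_vecMulVec (range s) x) v

theorem det_designMatrix (s : ℕ) :
    (designMatrix x s).det = ∏ i ∈ range s, (1 + x i ⬝ᵥ (designMatrix x i)⁻¹ *ᵥ x i) := by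
  induction s with
  | zero => simp [designMatrix]
  | succ s ih =>
    rw [designMatrix_succ, det_add_vecMulVec (posDef_designMatrix x s).det_pos.ne'.isUnit, ih,
      prod_range_succ]

theorem log_det_designMatrix (s : ℕ) :
    Real.log (designMatrix x s).det =
      ∑ i ∈ range s, Real.log (1 + x i ⬝ᵥ (designMatrix x i)⁻¹ *ᵥ x i) := by
  rw [det_designMatrix, Real.log_prod]
  intro i _
  linarith [dotProduct_designMatrix_inv_mulVec_nonneg x i (x i)]

theorem trace_designMatrix (s : ℕ) :
    (designMatrix x s).trace = Fintype.card ι + ∑ i ∈ range s, x i ⬝ᵥ x i := by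
  simp [designMatrix, trace_sum]

theorem det_designMatrix_le (hx : ∀ i, x i ⬝ᵥ x i ≤ 1) (s : ℕ) :
    (designMatrix x s).det ≤ ((s + Fintype.card ι) / Fintype.card ι) ^ Fintype.card ι := by
  refine (posDef_designMatrix x s).posSemidef.det_le_trace_div_card_pow.trans ?_
  have htrace : (designMatrix x s).trace ≤ s + Fintype.card ι := by
    rw [trace_designMatrix]
    have hsum := sum_le_sum fun i (_ : i ∈ range s) ↦ hx i
    simp only [sum_const, card_range, nsmul_eq_mul, mul_one] at hsum
    linarith
  have htrace_nonneg := (posDef_designMatrix x s).posSemidef.trace_nonneg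
  gcongr

end

end Matrix

theorem elliptic_potential_general (d n : ℕ)
    (x : ℕ → Fin d → ℝ)
    (hx : ∀ s, Real.sqrt (x s ⬝ᵥ x s) ≤ 1)
    (V : ℕ → Matrix (Fin d) (Fin d) ℝ)
    (hV : ∀ s, V s = 1 + ∑ i ∈ Finset.range s, vecMulVec (x i) (x i)) :
    (∑ s ∈ Finset.range n, x s ⬝ᵥ ((V s)⁻¹ *ᵥ x s)) ≤ 2 * Real.log (V n).det ∧
      2 * Real.log (V n).det ≤ 2 * d * Real.log ((n + d) / d) := by
  obtain rfl : V = designMatrix x := funext hV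
  have hnorm : ∀ s, x s ⬝ᵥ x s ≤ 1 := fun s ↦ Real.sqrt_le_one.mp (hx s)
  constructor
  · rw [log_det_designMatrix, mul_sum]
    exact sum_le_sum fun s _ ↦ Real.le_two_mul_log_one_add
      (dotProduct_designMatrix_inv_mulVec_nonneg x s (x s))
      ((dotProduct_designMatrix_inv_mulVec_le x s (x s)).trans (hnorm s))
  · have hdet := Real.log_le_log (posDef_designMatrix x n).det_pos (det_designMatrix_le x hnorm n)
    rw [Fintype.card_fin, Real.log_pow] at hdet
    linarith

theorem elliptic_potential (d n : ℕ) (hd : 0 < d)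
    (x : ℕ → Fin d → ℝ)
    (hx : ∀ s, Real.sqrt (x s ⬝ᵥ x s) ≤ 1)
    (V : ℕ → Matrix (Fin d) (Fin d) ℝ)
    (hV : ∀ s, V s = 1 + ∑ i ∈ Finset.range s, vecMulVec (x i) (x i)) :
    (∑ s ∈ Finset.range n, x s ⬝ᵥ ((V s)⁻¹ *ᵥ x s)) ≤ 2 * Real.log (V n).det ∧
      2 * Real.log (V n).det ≤ 2 * d * Real.log ((n + d) / d) :=
  elliptic_potential_general d n x hx V hV
end

section
/- Let $\mathcal{X} \subset \mathbb{R}^d$ be finite with optimal action $x^*$ for parameter $\theta^*$, all suboptimality gaps satisfying $\Delta(x) = \langle \theta^*, x^* - x \rangle \leq 1$. Let $V$ be positive definite, $\hat\theta \in \mathbb{R}^d$, $\beta = \|\hat\theta - \theta^*\|_V^2$, and for each $x \neq \hat x$ (where $\hat x = \arg\max_x \langle x, \hat\theta\rangle$) let $m = \tfrac12\min_{x \neq \hat x}\min_{\nu: \langle \nu, x - \hat x\rangle \geq 0} \|\nu - \hat\theta\|_V^2$. If $\beta < 2m$, then $\hat x = x^*$ and for every $x \in \mathcal{X}$, $\big((2m)^{1/2}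 - \beta^{1/2}\big)\|x^* - x\|_{V^{-1}} \leq 1$. -/
/-!
If `xhat ≠ xstar`, then `θstar` itself lies in the alternative of `xstar`, at squared `V`-distance
`β < 2m` from `θhat`, contradicting the definition of `m`. For `x ≠ xhat` and `u = xhat - x`, the
`V`-orthogonal projection of `θhat` onto `u⊥` lies in the alternative of `x`, which gives
`2m ≤ ⟨θhat, u⟩² / ‖u‖²_{V⁻¹}`, while Cauchy–Schwarz gives `⟨θhat - θstar, u⟩ ≤ √β ‖u‖_{V⁻¹}`.
Subtracting, `(√(2m) - √β) ‖u‖_{V⁻¹} ≤ ⟨θstar, u⟩ = Δ(x) ≤ 1`.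
-/

open Matrix

namespace Matrix

variable {n : Type*} [Fintype n] {V : Matrix n n ℝ}

lemma PosSemidef.sInf_alternatives_le (hV : V.PosSemidef) {X : Set (n → ℝ)} {θ xhat x ν : n → ℝ}
    (hx : x ∈ X) (hne : x ≠ xhat) (hν : 0 ≤ ν ⬝ᵥ (x - xhat)) :
    sInf {r : ℝ | ∃ x ∈ X, x ≠ xhat ∧ ∃ ν : n → ℝ, 0 ≤ ν ⬝ᵥ (x - xhat) ∧
      r = (ν - θ) ⬝ᵥ (V *ᵥ (ν - θ))} ≤ (ν - θ) ⬝ᵥ (V *ᵥ (ν - θ)) := by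
  refine csInf_le ⟨0, ?_⟩ ⟨x, hx, hne, ν, hν, rfl⟩
  rintro _ ⟨-, -, -, ν', -, rfl⟩
  simpa using hV.dotProduct_mulVec_nonneg (ν' - θ)

variable [DecidableEq n]

lemma PosDef.dotProduct_mulVec_inv_mulVec (hV : V.PosDef) (x y : n → ℝ) :
    x ⬝ᵥ (V *ᵥ (V⁻¹ *ᵥ y)) = x ⬝ᵥ y := by
  rw [mulVec_mulVec, mul_nonsing_inv _ hV.det_pos.ne'.isUnit, one_mulVec]

lemma PosDef.dotProduct_sq_le (hV : V.PosDef) (e u : n → ℝ) :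
    (e ⬝ᵥ u) ^ 2 ≤ (e ⬝ᵥ (V *ᵥ e)) * (u ⬝ᵥ (V⁻¹ *ᵥ u)) := by
  have hcs := (toBilin' V).apply_sq_le_of_symm
    (fun x => by simpa [toBilin'_apply'] using hV.posSemidef.dotProduct_mulVec_nonneg x)
    (LinearMap.BilinForm.isSymm_iff.mp
      (isSymm_toBilin'_iff_isSymm.mpr (isHermitian_iff_isSymm.mp hV.isHermitian)))
    e (V⁻¹ *ᵥ u)
  rwa [toBilin'_apply', toBilin'_apply', toBilin'_apply', hV.dotProduct_mulVec_inv_mulVec,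
    hV.dotProduct_mulVec_inv_mulVec, dotProduct_comm (V⁻¹ *ᵥ u)] at hcs

lemma PosDef.exists_dotProduct_eq_zero_and_dotProduct_mulVec_eq (hV : V.PosDef) (θ u : n → ℝ) :
    ∃ ν : n → ℝ, ν ⬝ᵥ u = 0 ∧
      (ν - θ) ⬝ᵥ (V *ᵥ (ν - θ)) = (θ ⬝ᵥ u) ^ 2 / (u ⬝ᵥ (V⁻¹ *ᵥ u)) := by
  rcases eq_or_ne u 0 with rfl | hu
  · exact ⟨θ, by simp⟩
  have hw : 0 < u ⬝ᵥ (V⁻¹ *ᵥ u) := by simpa using hV.inv.dotProduct_mulVec_pos hu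
  -- the `V`-orthogonal projection of `θ` onto `u⊥`
  refine ⟨θ - (θ ⬝ᵥ u / u ⬝ᵥ (V⁻¹ *ᵥ u)) • (V⁻¹ *ᵥ u), ?_, ?_⟩
  · rw [sub_dotProduct, smul_dotProduct, dotProduct_comm (V⁻¹ *ᵥ u), smul_eq_mul,
      div_mul_cancel₀ _ hw.ne', sub_self]
  · rw [sub_sub_cancel_left, mulVec_neg, mulVec_smul, neg_dotProduct, dotProduct_neg, neg_neg,
      smul_dotProduct, dotProduct_smul, hV.dotProduct_mulVec_inv_mulVec,
      dotProduct_comm (V⁻¹ *ᵥ u), smul_eq_mul, smul_eq_mul]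
    field_simp

end Matrix

namespace Real

lemma sqrt_mul_sqrt_le_of_mul_le_sq {a b c : ℝ} (ha : 0 ≤ a) (hc : 0 ≤ c) (h : a * b ≤ c ^ 2) :
    √a * √b ≤ c := by
  rw [← sqrt_mul ha]
  exact (sqrt_le_left hc).mpr h

lemma le_sqrt_mul_sqrt_of_sq_le {a b c : ℝ} (ha : 0 ≤ a) (h : c ^ 2 ≤ a * b) :
    c ≤ √a * √b := by
  rw [← sqrt_mul ha]
  exact le_sqrt_of_sq_le h

end Real

theorem empirical_best_is_optimal (d : ℕ)
    (Xset : Finset (Fin d → ℝ)) (θstar θhat : Fin d → ℝ)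
    (V : Matrix (Fin d) (Fin d) ℝ) (hVpd : V.PosDef)
    (xstar : Fin d → ℝ) (hxstar : xstar ∈ Xset)
    (hopt : ∀ x ∈ Xset, x ≠ xstar → θstar ⬝ᵥ x < θstar ⬝ᵥ xstar)
    (hgap : ∀ x ∈ Xset, θstar ⬝ᵥ (xstar - x) ≤ 1)
    (xhat : Fin d → ℝ) (hxhat : xhat ∈ Xset)
    (hxhatmax : ∀ x ∈ Xset, θhat ⬝ᵥ x ≤ θhat ⬝ᵥ xhat)
    (β m : ℝ)
    (hβ : β = (θhat - θstar) ⬝ᵥ (V *ᵥ (θhat - θstar)))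
    (hm : m = (1 / 2) * sInf {r : ℝ | ∃ x ∈ Xset, x ≠ xhat ∧
        ∃ ν : Fin d → ℝ, 0 ≤ ν ⬝ᵥ (x - xhat) ∧
          r = (ν - θhat) ⬝ᵥ (V *ᵥ (ν - θhat))})
    (hβm : β < 2 * m) :
    xhat = xstar ∧ ∀ x ∈ Xset,
      (Real.sqrt (2 * m) - Real.sqrt β) *
        Real.sqrt ((xstar - x) ⬝ᵥ (V⁻¹ *ᵥ (xstar - x))) ≤ 1 := by
  have h2m : ∀ x ∈ Xset, x ≠ xhat → ∀ ν, 0 ≤ ν ⬝ᵥ (x - xhat) →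
      2 * m ≤ (ν - θhat) ⬝ᵥ (V *ᵥ (ν - θhat)) := fun x hx hne ν hν => by
    rw [hm, ← mul_assoc, mul_one_div_cancel two_ne_zero, one_mul]
    exact hVpd.posSemidef.sInf_alternatives_le (X := ↑Xset) hx hne hν
  have hβ0 : 0 ≤ β := by simpa [hβ] using hVpd.posSemidef.dotProduct_mulVec_nonneg (θhat - θstar)
  have hxhat_eq : xhat = xstar := by
    by_contra hne
    have hθstar := h2m xstar hxstar (Ne.symm hne) θstar
      (by linarith [dotProduct_sub θstar xstar xhat, hopt xhat hxhat hne])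
    rw [← neg_sub, mulVec_neg, dotProduct_neg, neg_dotProduct, neg_neg, ← hβ] at hθstar
    linarith
  refine ⟨hxhat_eq, fun x hx => ?_⟩
  subst hxhat_eq
  rcases eq_or_ne x xhat with rfl | hne
  · simp
  have hw : 0 < (xhat - x) ⬝ᵥ (V⁻¹ *ᵥ (xhat - x)) := by
    simpa using hVpd.inv.dotProduct_mulVec_pos (sub_ne_zero.mpr hne.symm)
  have hg : 0 ≤ θhat ⬝ᵥ (xhat - x) := by
    linarith [dotProduct_sub θhat xhat x, hxhatmax x hx]
  obtain ⟨ν, hν, hνdist⟩ := hVpd.exists_dotProduct_eq_zero_and_dotProduct_mulVec_eq θhat (xhat - x)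
  have hproj := h2m x hx hne ν (by rw [← neg_sub, dotProduct_neg, hν, neg_zero])
  rw [hνdist, le_div_iff₀ hw] at hproj
  calc (√(2 * m) - √β) * √((xhat - x) ⬝ᵥ (V⁻¹ *ᵥ (xhat - x)))
      ≤ θhat ⬝ᵥ (xhat - x) - (θhat - θstar) ⬝ᵥ (xhat - x) := by
        rw [sub_mul]
        exact sub_le_sub (Real.sqrt_mul_sqrt_le_of_mul_le_sq (by linarith) hg hproj)
          (Real.le_sqrt_mul_sqrt_of_sq_le hβ0 (hβ ▸ hVpd.dotProduct_sq_le _ _))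
    _ = θstar ⬝ᵥ (xhat - x) := by rw [sub_dotProduct, sub_sub_cancel]
    _ ≤ 1 := hgap x hx
end

section
/- Let $K \subset \mathbb{R}^d$ be a convex polytope, $\eta \in \mathbb{R}^d$ a unit vector, and suppose $K_0 = \{x \in K : \langle x, \eta \rangle = 0\}$ is nonempty. Then there exists a constant $c > 0$ such that for all $z \in K$, $\min_{x \in K_0}\|x - z\|_2 \leq c\,|\langle z, \eta\rangle|$. -/
/-!
With `f = ⟪·, η⟫` and `K` the hull of `S`, split the vertices into those with `f > 0` and those
with `f ≤ 0`. A point `z` of `K` with `f z > 0` lies on a segment `[P, N]` joining the hulls of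
the two groups, and this segment crosses the hyperplane `f = 0` at a point `w` with
`z - w = (f z / (f P - f N)) • (P - N)`. As `f P` is at least the smallest positive value `m` of
`f` on the vertices, `dist z w ≤ diam K / m * f z`.
The case `f z < 0` is the same argument for `-f`.
-/

open scoped RealInnerProductSpace
open Set Metric

theorem Finset.exists_pos_forall_le_of_pos {ι α : Type*} [LinearOrder α] [Zero α] [NoMaxOrder α]
    (s : Finset ι) (g : ι → α) : ∃ m > 0, ∀ i ∈ s, 0 < g i → m ≤ g i := by
  by_cases hpos : (s.filter (0 < g ·)).Nonempty
  · obtain ⟨i₀, hi₀, hmin⟩ := (s.filter (0 < g ·)).exists_min_image g hpos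
    exact ⟨g i₀, (mem_filter.mp hi₀).2, fun i hi hgi => hmin i (mem_filter.mpr ⟨hi, hgi⟩)⟩
  · obtain ⟨m, hm⟩ := exists_gt (0 : α)
    exact ⟨m, hm, fun i hi hgi => (hpos ⟨i, mem_filter.mpr ⟨hi, hgi⟩⟩).elim⟩

section Crossing

variable {𝕜 E : Type*} [Field 𝕜] [LinearOrder 𝕜] [IsStrictOrderedRing 𝕜] [AddCommGroup E]
  [Module 𝕜 E]

theorem LinearMap.exists_mem_segment_apply_eq_zero_sub_eq (f : E →ₗ[𝕜] 𝕜) {P N z : E}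
    (hP : 0 < f P) (hN : f N ≤ 0) (hz : z ∈ segment 𝕜 P N) :
    ∃ w ∈ segment 𝕜 P N, f w = 0 ∧ z - w = (f z / (f P - f N)) • (P - N) := by
  obtain ⟨s, -, rfl⟩ := segment_eq_image' 𝕜 P N ▸ hz
  have hD : 0 < f P - f N := by linarith
  refine ⟨P + (f P / (f P - f N)) • (N - P), ?_, ?_, ?_⟩
  · rw [segment_eq_image']
    exact ⟨_, ⟨by positivity, (div_le_one hD).mpr (by linarith)⟩, rfl⟩
  · simp only [map_add, map_smul, map_sub, smul_eq_mul]
    field_simp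
    ring
  · simp only [map_add, map_smul, map_sub, smul_eq_mul]
    match_scalars <;> field_simp <;> ring

end Crossing

section Polytope

variable {E : Type*} [NormedAddCommGroup E] [NormedSpace ℝ E]

theorem infDist_convexHull_slice_le (f : E →ₗ[ℝ] ℝ) (S : Finset E)
    (hne : {x ∈ convexHull ℝ ↑S | f x = 0}.Nonempty) {m : ℝ} (hm : 0 < m)
    (hmS : ∀ v ∈ S, 0 < f v → m ≤ f v) {z : E} (hz : z ∈ convexHull ℝ ↑S) (hfz : 0 ≤ f z) :
    infDist z {x ∈ convexHull ℝ ↑S | f x = 0} ≤ diam (convexHull ℝ (S : Set E)) / m * f z := by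
  set K := convexHull ℝ (S : Set E)
  rcases hfz.eq_or_lt with hfz | hfz
  · rw [infDist_zero_of_mem (show z ∈ {x ∈ K | f x = 0} from ⟨hz, hfz.symm⟩), ← hfz, mul_zero]
  set Spos := (S : Set E) ∩ {x | 0 < f x}
  set Snonpos := (S : Set E) \ {x | 0 < f x}
  have hpos : convexHull ℝ Spos ⊆ {x | m ≤ f x} :=
    convexHull_min (fun v hv => hmS v hv.1 hv.2) (convex_halfSpace_ge f.isLinear m)
  have hnonpos : convexHull ℝ Snonpos ⊆ {x | f x ≤ 0} :=
    convexHull_min (fun v hv => (not_lt.mp hv.2 : f v ≤ 0)) (convex_halfSpace_le f.isLinear 0)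
  have hS : Spos ∪ Snonpos = S := inter_union_sdiff _ _
  have hSpos : Spos.Nonempty := by
    by_contra h
    rw [not_nonempty_iff_eq_empty.mp h, empty_union] at hS
    exact (hnonpos (hS ▸ hz)).not_gt hfz
  have hSnonpos : Snonpos.Nonempty := by
    obtain ⟨x, hxK, hfx⟩ := hne
    by_contra h
    rw [not_nonempty_iff_eq_empty.mp h, union_empty] at hS
    exact (hpos (hS ▸ hxK)).not_gt (hfx ▸ hm)
  have hzJoin : z ∈ convexHull ℝ (Spos ∪ Snonpos) := hS ▸ hz
  rw [convexHull_union hSpos hSnonpos] at hzJoin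
  obtain ⟨P, hP, N, hN, hzPN⟩ := mem_convexJoin.mp hzJoin
  have hPK : P ∈ K := convexHull_mono inter_subset_left hP
  have hNK : N ∈ K := convexHull_mono sdiff_subset hN
  have hmP : m ≤ f P := hpos hP
  have hNf : f N ≤ 0 := hnonpos hN
  obtain ⟨w, hw, hfw, hzw⟩ := f.exists_mem_segment_apply_eq_zero_sub_eq (hm.trans_le hmP) hNf hzPN
  have hwK : w ∈ K := (convex_convexHull ℝ _).segment_subset hPK hNK hw
  have hbdd : Bornology.IsBounded K := isBounded_convexHull.mpr S.finite_toSet.isBounded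
  calc infDist z {x ∈ K | f x = 0} ≤ dist z w := infDist_le_dist_of_mem ⟨hwK, hfw⟩
    _ = f z / (f P - f N) * dist P N := by
      rw [dist_eq_norm, hzw, norm_smul, Real.norm_eq_abs, abs_of_pos (div_pos hfz (by linarith)),
        dist_eq_norm]
    _ ≤ f z / m * diam K := by
      gcongr
      · linarith
      · exact dist_le_diam_of_mem hbdd hPK hNK
    _ = diam K / m * f z := by ring

theorem exists_pos_infDist_convexHull_slice_le_mul_abs (f : E →ₗ[ℝ] ℝ) (S : Finset E)
    (hne : {x ∈ convexHull ℝ ↑S | f x = 0}.Nonempty) :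
    ∃ c > 0, ∀ z ∈ convexHull ℝ ↑S, infDist z {x ∈ convexHull ℝ ↑S | f x = 0} ≤ c * |f z| := by
  obtain ⟨m, hm, hmS⟩ := S.exists_pos_forall_le_of_pos (|f ·|)
  have hneg : {x ∈ convexHull ℝ ↑S | (-f) x = 0} = {x ∈ convexHull ℝ ↑S | f x = 0} := by
    simp only [LinearMap.neg_apply, neg_eq_zero]
  set D := diam (convexHull ℝ (S : Set E))
  refine ⟨(D + 1) / m, by positivity, fun z hz => ?_⟩
  rcases le_total 0 (f z) with hfz | hfz
  · calc _ ≤ D / m * f z := infDist_convexHull_slice_le f S hne hm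
          (fun v hv hfv => abs_of_pos hfv ▸ hmS v hv (abs_pos_of_pos hfv)) hz hfz
      _ ≤ (D + 1) / m * |f z| := by rw [abs_of_nonneg hfz]; gcongr; linarith
  · have hmS' : ∀ v ∈ S, 0 < (-f) v → m ≤ (-f) v := fun v hv hfv => by
      rw [LinearMap.neg_apply] at hfv ⊢
      rw [neg_pos] at hfv
      simpa only [abs_of_neg hfv] using hmS v hv (abs_pos_of_neg hfv)
    calc _ ≤ D / m * (-f) z := hneg ▸ infDist_convexHull_slice_le (-f) S (hneg ▸ hne) hm hmS'
          hz (by simpa using hfz)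
      _ = D / m * -f z := rfl
      _ ≤ (D + 1) / m * |f z| := by rw [abs_of_nonpos hfz]; gcongr <;> linarith

end Polytope

theorem polytope_slice_distance_general (d : ℕ)
    (S : Finset (EuclideanSpace ℝ (Fin d)))
    (η : EuclideanSpace ℝ (Fin d))
    (K : Set (EuclideanSpace ℝ (Fin d))) (hK : K = convexHull ℝ (S : Set (EuclideanSpace ℝ (Fin d))))
    (K0 : Set (EuclideanSpace ℝ (Fin d))) (hK0 : K0 = {x ∈ K | ⟪x, η⟫ = 0})
    (hne : K0.Nonempty) :
    ∃ c > (0:ℝ), ∀ z ∈ K, Metric.infDist z K0 ≤ c * |⟪z, η⟫| := by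
  subst hK hK0
  simpa using exists_pos_infDist_convexHull_slice_le_mul_abs (innerSLFlip ℝ η).toLinearMap S
    (by simpa using hne)

theorem polytope_slice_distance (d : ℕ)
    (S : Finset (EuclideanSpace ℝ (Fin d)))
    (η : EuclideanSpace ℝ (Fin d)) (hη : ‖η‖ = 1)
    (K : Set (EuclideanSpace ℝ (Fin d))) (hK : K = convexHull ℝ (S : Set (EuclideanSpace ℝ (Fin d))))
    (K0 : Set (EuclideanSpace ℝ (Fin d))) (hK0 : K0 = {x ∈ K | ⟪x, η⟫ = 0})
    (hne : K0.Nonempty) :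
    ∃ c > (0:ℝ), ∀ z ∈ K, Metric.infDist z K0 ≤ c * |⟪z, η⟫| :=
  polytope_slice_distance_general d S η K hK K0 hK0 hne
end

section
/- Let $V \subset \mathbb{R}^d$ be a finite set, $K = \mathrm{conv}(V)$, $\eta$ a unit vector, $K_0 = \{x \in K : \langle x, \eta\rangle = 0\}$ nonempty, and suppose $\varphi : V \to K_0$ satisfies $\|v - \varphi(v)\|_2 \leq c\langle \eta, v - \varphi(v)\rangle$ for all $v \in V$ with $\langle v, \eta\rangle \geq 0$. Then for any $z \in \mathrm{conv}\{v \in V : \langle v,\eta\rangle \geq 0\}$, there exists $x \in K_0$ with $\|z - x\|_2 \leq c\langle \eta, z\rangle$. -/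
open scoped RealInnerProductSpace

/- The bound at each vertex `v` reads `‖v - φ v‖ ≤ c ⟪η, v⟫` because `φ v ⊥ η`. The set of points
`z` admitting some `x ∈ K₀` with `‖z - x‖ ≤ c ⟪η, z⟫` is convex (averaging the witnesses, using the
triangle inequality and linearity of `⟪η, ·⟫`), so it contains the convex hull of those vertices. -/

theorem Convex.setOf_exists_norm_sub_le {E : Type*} [SeminormedAddCommGroup E] [NormedSpace ℝ E]
    {A : Set E} (hA : Convex ℝ A) {g : E → ℝ} (hg : ConcaveOn ℝ Set.univ g) :
    Convex ℝ {z | ∃ x ∈ A, ‖z - x‖ ≤ g z} := by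
  rintro z₁ ⟨x₁, hx₁, h₁⟩ z₂ ⟨x₂, hx₂, h₂⟩ a b ha hb hab
  refine ⟨a • x₁ + b • x₂, hA hx₁ hx₂ ha hb hab, ?_⟩
  calc ‖a • z₁ + b • z₂ - (a • x₁ + b • x₂)‖ = ‖a • (z₁ - x₁) + b • (z₂ - x₂)‖ := by
        rw [smul_sub, smul_sub, add_sub_add_comm]
    _ ≤ a * ‖z₁ - x₁‖ + b * ‖z₂ - x₂‖ := by
        refine (norm_add_le _ _).trans ?_
        rw [norm_smul_of_nonneg ha, norm_smul_of_nonneg hb]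
    _ ≤ a * g z₁ + b * g z₂ := by gcongr
    _ ≤ g (a • z₁ + b • z₂) := hg.2 trivial trivial ha hb hab

theorem convex_setOf_inner_eq_zero {E : Type*} [NormedAddCommGroup E] [InnerProductSpace ℝ E]
    (η : E) : Convex ℝ {x : E | ⟪x, η⟫ = 0} := by
  simpa only [innerₛₗ_apply_apply, real_inner_comm] using
    convex_hyperplane (innerₛₗ ℝ η).isLinear 0

theorem polytope_vertex_map_extension_general (d : ℕ)
    (V : Finset (EuclideanSpace ℝ (Fin d)))
    (η : EuclideanSpace ℝ (Fin d))
    (K : Set (EuclideanSpace ℝ (Fin d)))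
    (hK : K = convexHull ℝ (V : Set (EuclideanSpace ℝ (Fin d))))
    (K0 : Set (EuclideanSpace ℝ (Fin d))) (hK0 : K0 = {x ∈ K | ⟪x, η⟫ = 0})
    (c : ℝ) (φ : EuclideanSpace ℝ (Fin d) → EuclideanSpace ℝ (Fin d))
    (hφmem : ∀ v ∈ V, φ v ∈ K0)
    (hφ : ∀ v ∈ V, 0 ≤ ⟪v, η⟫ → ‖v - φ v‖ ≤ c * ⟪η, v - φ v⟫) :
    ∀ z ∈ convexHull ℝ {v : EuclideanSpace ℝ (Fin d) | v ∈ V ∧ 0 ≤ ⟪v, η⟫},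
      ∃ x ∈ K0, ‖z - x‖ ≤ c * ⟪η, z⟫ := by
  have hK0_convex : Convex ℝ K0 :=
    hK0 ▸ (hK ▸ convex_convexHull ℝ _).inter (convex_setOf_inner_eq_zero η)
  have hS_convex : Convex ℝ {z | ∃ x ∈ K0, ‖z - x‖ ≤ c * ⟪η, z⟫} :=
    hK0_convex.setOf_exists_norm_sub_le ((c • innerₛₗ ℝ η).concaveOn convex_univ)
  refine fun z hz ↦ convexHull_min ?_ hS_convex hz
  rintro v ⟨hvV, hvη⟩
  have hφv_perp : ⟪η, φ v⟫ = 0 := by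
    rw [real_inner_comm]
    exact (hK0 ▸ hφmem v hvV).2
  refine ⟨φ v, hφmem v hvV, ?_⟩
  simpa only [inner_sub_right, hφv_perp, sub_zero] using hφ v hvV hvη

theorem polytope_vertex_map_extension (d : ℕ)
    (V : Finset (EuclideanSpace ℝ (Fin d)))
    (η : EuclideanSpace ℝ (Fin d)) (hη : ‖η‖ = 1)
    (K : Set (EuclideanSpace ℝ (Fin d)))
    (hK : K = convexHull ℝ (V : Set (EuclideanSpace ℝ (Fin d))))
    (K0 : Set (EuclideanSpace ℝ (Fin d))) (hK0 : K0 = {x ∈ K | ⟪x, η⟫ = 0})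
    (hne : K0.Nonempty)
    (c : ℝ) (φ : EuclideanSpace ℝ (Fin d) → EuclideanSpace ℝ (Fin d))
    (hφmem : ∀ v ∈ V, φ v ∈ K0)
    (hφ : ∀ v ∈ V, 0 ≤ ⟪v, η⟫ → ‖v - φ v‖ ≤ c * ⟪η, v - φ v⟫) :
    ∀ z ∈ convexHull ℝ {v : EuclideanSpace ℝ (Fin d) | v ∈ V ∧ 0 ≤ ⟪v, η⟫},
      ∃ x ∈ K0, ‖z - x‖ ≤ c * ⟪η, z⟫ :=
  polytope_vertex_map_extension_general d V η K hK K0 hK0 c φ hφmem hφ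
end

section
/- Let $\Delta, I \in \mathbb{R}_{\geq 0}^k$ with $I(x^*) = 0$ and $\Delta(x^*) = 0$ for a distinguished index $x^*$, and let $\delta > 0$ satisfy $2\delta \leq \Delta(x) + \delta$ for all $x \neq x^*$ (i.e. $\delta \leq \min_{x\neq x^*}\Delta(x)$), with $\hat\Delta(x) = \Delta(x) + \delta$. Suppose $I(z) > 0$ for some $z \neq x^*$. Then the distribution $\mu = (1-p)e_{x^*} + p\,e_{z_0}$ with $z_0 = \arg\min_{z \neq x^*}\Delta(z)/I(z)$ and $p = \delta/\Delta(z_0)$ minimizes the information ratio $\Psi(\mu) = \hat\Delta(\mu)^2/I(\mu)$ over all probability distributions on $[k]$, and $\min_\mu \Psi(\mu) = 4\delta\,\Delta(z_0)/I(z_0)$. -/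
/-!
Write `S = ∑ ν Δ` and `B = ∑ ν I`. Since `z₀` minimises `Δ / I`, every action satisfies
`I x · Δ(z₀) ≤ Δ x · I(z₀)`, so averaging gives `B · Δ(z₀) ≤ S · I(z₀)`. Together with AM-GM,
`(S + δ)² ≥ 4δS`, this yields `Ψ(ν) = (S + δ)² / B ≥ 4δ S / B ≥ 4δ Δ(z₀) / I(z₀)`.
The two-point distribution attains the bound: it has `S = p Δ(z₀) = δ`, so AM-GM is tight,
and it only plays `x*` and `z₀`, so the averaged ratio bound is tight as well.
-/

open Finset

theorem sum_two_point_mul {α R : Type*} [Fintype α] [DecidableEq α] [Semiring R]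
    (a b : α) (q p : R) (f : α → R) :
    ∑ x, (q * (if x = a then 1 else 0) + p * (if x = b then 1 else 0)) * f x
      = q * f a + p * f b := by
  simp [add_mul, sum_add_distrib]

theorem sum_mul_add_const_of_sum_eq_one {α : Type*} [Fintype α] (ν f : α → ℝ) (c : ℝ)
    (hν : ∑ x, ν x = 1) :
    ∑ x, ν x * (f x + c) = ∑ x, ν x * f x + c := by
  simp [mul_add, sum_add_distrib, ← sum_mul, hν]

theorem mul_le_mul_of_forall_div_le_div {ι : Type*} {Δ I : ι → ℝ} {z₀ : ι}
    (hΔ : ∀ x, 0 ≤ Δ x) (hI : ∀ x, 0 ≤ I x) (hIz₀ : 0 < I z₀)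
    (hmin : ∀ z, 0 < I z → Δ z₀ / I z₀ ≤ Δ z / I z) (x : ι) :
    I x * Δ z₀ ≤ Δ x * I z₀ := by
  rcases (hI x).eq_or_lt with hx | hx
  · rw [← hx, zero_mul]
    exact mul_nonneg (hΔ x) hIz₀.le
  · have := hmin x hx
    rwa [div_le_div_iff₀ hIz₀ hx, mul_comm (Δ z₀)] at this

theorem sum_mul_mul_le_sum_mul_mul {α : Type*} [Fintype α] {ν a b : α → ℝ} {c d : ℝ}
    (hν : ∀ x, 0 ≤ ν x) (h : ∀ x, a x * c ≤ b x * d) :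
    (∑ x, ν x * a x) * c ≤ (∑ x, ν x * b x) * d := by
  simp only [sum_mul, mul_assoc]
  exact sum_le_sum fun x _ => mul_le_mul_of_nonneg_left (h x) (hν x)

theorem four_mul_div_le_sq_add_div {S B δ c d : ℝ} (hδ : 0 < δ) (hB : 0 < B) (hd : 0 < d)
    (h : B * c ≤ S * d) :
    4 * δ * c / d ≤ (S + δ) ^ 2 / B := by
  calc 4 * δ * c / d ≤ 4 * δ * S / B := by
        rw [div_le_div_iff₀ hd hB]
        nlinarith [mul_le_mul_of_nonneg_left h (by positivity : (0 : ℝ) ≤ 4 * δ)]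
    _ = 4 * S * δ / B := by ring
    _ ≤ (S + δ) ^ 2 / B := div_le_div_of_nonneg_right (four_mul_le_sq_add S δ) hB.le

theorem oracle_ids_distribution_general (k : ℕ) (Δ I : Fin k → ℝ)
    (hΔ : ∀ x, 0 ≤ Δ x) (hI : ∀ x, 0 ≤ I x)
    (xstar : Fin k) (hIstar : I xstar = 0) (hΔstar : Δ xstar = 0)
    (δ : ℝ) (hδ : 0 < δ)
    (z0 : Fin k) (hIz0 : 0 < I z0)
    (hz0min : ∀ z, z ≠ xstar → 0 < I z → Δ z0 / I z0 ≤ Δ z / I z)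
    (hΔz0 : δ < Δ z0)
    (p : ℝ) (hp : p = δ / Δ z0)
    (μ : Fin k → ℝ)
    (hμ : ∀ x, μ x = (1 - p) * (if x = xstar then 1 else 0)
        + p * (if x = z0 then 1 else 0))
    (Ψ : (Fin k → ℝ) → ℝ)
    (hΨ : ∀ ν, Ψ ν = (∑ x, ν x * (Δ x + δ)) ^ 2 / (∑ x, ν x * I x)) :
    (∀ x, 0 ≤ μ x) ∧ (∑ x, μ x) = 1 ∧
      Ψ μ = 4 * δ * Δ z0 / I z0 ∧
      ∀ ν : Fin k → ℝ, (∀ x, 0 ≤ ν x) → (∑ x, ν x) = 1 →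
        0 < (∑ x, ν x * I x) → Ψ μ ≤ Ψ ν := by
  have hΔz0_pos : 0 < Δ z0 := hδ.trans hΔz0
  have hp_pos : 0 < p := hp ▸ div_pos hδ hΔz0_pos
  have hp_lt_one : p < 1 := hp ▸ (div_lt_one hΔz0_pos).2 hΔz0
  have hpΔ : p * Δ z0 = δ := by rw [hp]; field_simp
  have hμ_sum : ∀ f : Fin k → ℝ, ∑ x, μ x * f x = (1 - p) * f xstar + p * f z0 := fun f => by
    simp only [hμ, sum_two_point_mul]
  have hΨμ : Ψ μ = 4 * δ * Δ z0 / I z0 := by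
    rw [hΨ, hμ_sum, hμ_sum, hΔstar, hIstar]
    field_simp
    rw [← hpΔ]
    ring
  refine ⟨fun x => ?_, by simpa using hμ_sum 1, hΨμ, fun ν hν hν_sum hνI => ?_⟩
  · rw [hμ]
    split_ifs <;> linarith
  have hcross : (∑ x, ν x * I x) * Δ z0 ≤ (∑ x, ν x * Δ x) * I z0 :=
    sum_mul_mul_le_sum_mul_mul hν <| mul_le_mul_of_forall_div_le_div hΔ hI hIz0
      fun z hz => hz0min z (by rintro rfl; exact hz.ne' hIstar) hz
  rw [hΨμ, hΨ, sum_mul_add_const_of_sum_eq_one ν Δ δ hν_sum]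
  exact four_mul_div_le_sq_add_div hδ hνI hIz0 hcross

theorem oracle_ids_distribution (k : ℕ) (Δ I : Fin k → ℝ)
    (hΔ : ∀ x, 0 ≤ Δ x) (hI : ∀ x, 0 ≤ I x)
    (xstar : Fin k) (hIstar : I xstar = 0) (hΔstar : Δ xstar = 0)
    (δ : ℝ) (hδ : 0 < δ) (hδmin : ∀ x, x ≠ xstar → δ ≤ Δ x)
    (z0 : Fin k) (hz0 : z0 ≠ xstar) (hIz0 : 0 < I z0)
    (hz0min : ∀ z, z ≠ xstar → 0 < I z → Δ z0 / I z0 ≤ Δ z / I z)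
    (hΔz0 : δ < Δ z0)
    (p : ℝ) (hp : p = δ / Δ z0)
    (μ : Fin k → ℝ)
    (hμ : ∀ x, μ x = (1 - p) * (if x = xstar then 1 else 0)
        + p * (if x = z0 then 1 else 0))
    (Ψ : (Fin k → ℝ) → ℝ)
    (hΨ : ∀ ν, Ψ ν = (∑ x, ν x * (Δ x + δ)) ^ 2 / (∑ x, ν x * I x)) :
    (∀ x, 0 ≤ μ x) ∧ (∑ x, μ x) = 1 ∧
      Ψ μ = 4 * δ * Δ z0 / I z0 ∧
      ∀ ν : Fin k → ℝ, (∀ x, 0 ≤ ν x) → (∑ x, ν x) = 1 →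
        0 < (∑ x, ν x * I x) → Ψ μ ≤ Ψ ν :=
  oracle_ids_distribution_general k Δ I hΔ hI xstar hIstar hΔstar δ hδ z0 hIz0 hz0min hΔz0 p hp μ hμ
    Ψ hΨ
end

section
/- Let $\mu^*$ minimize the information ratio $\Psi(\mu) = \hat\Delta(\mu)^2/I(\mu)$ over probability distributions on $[k]$, where $\hat\Delta(x) \geq \delta > 0$ for all $x$ and $\hat\Delta(x^*) = \delta$ for some index $x^*$, and $I(\mu^*) > 0$. Then $\hat\Delta(\mu^*) \leq 2\delta$. -/
/-!
If `Δ(μ*) > 2δ`, move a small mass `t` from `μ*` onto the greedy action `x*`. The gap becomes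
`(1 - t) Δ(μ*) + t δ` while the information gain stays at least `(1 - t) I(μ*)`, and since
`((1 - t) D + t δ)² - (1 - t) D² = t (t (D - δ)² - D (D - 2δ))` is negative for small `t > 0`,
the information ratio strictly drops, contradicting minimality of `μ*`.
-/

open Finset

section Mixture

variable {ι : Type*} [DecidableEq ι]

def mixSingle (t : ℝ) (μ : ι → ℝ) (x₀ : ι) : ι → ℝ :=
  (1 - t) • μ + Pi.single x₀ t

lemma sum_mixSingle_mul [Fintype ι] (t : ℝ) (μ : ι → ℝ) (x₀ : ι) (f : ι → ℝ) :
    ∑ x, mixSingle t μ x₀ x * f x = (1 - t) * ∑ x, μ x * f x + t * f x₀ := by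
  simp only [mixSingle, Pi.add_apply, Pi.smul_apply, smul_eq_mul, add_mul, sum_add_distrib,
    mul_assoc, ← mul_sum, Pi.single_apply, ite_mul, zero_mul, sum_ite_eq', mem_univ, if_true]

lemma sum_mixSingle [Fintype ι] (t : ℝ) (μ : ι → ℝ) (x₀ : ι) :
    ∑ x, mixSingle t μ x₀ x = (1 - t) * ∑ x, μ x + t := by
  simpa using sum_mixSingle_mul t μ x₀ 1

lemma mixSingle_nonneg {t : ℝ} (ht₀ : 0 ≤ t) (ht₁ : t ≤ 1) {μ : ι → ℝ} (hμ : ∀ x, 0 ≤ μ x)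
    (x₀ x : ι) : 0 ≤ mixSingle t μ x₀ x := by
  have hsingle : 0 ≤ Pi.single (M := fun _ => ℝ) x₀ t x := by
    rw [Pi.single_apply]; split_ifs <;> simp [ht₀]
  exact add_nonneg (mul_nonneg (by linarith) (hμ x)) hsingle

end Mixture

lemma exists_sq_lerp_lt {D δ : ℝ} (hD : 0 < D) (h : 2 * δ < D) :
    ∃ t, 0 < t ∧ t < 1 ∧ ((1 - t) * D + t * δ) ^ 2 < (1 - t) * D ^ 2 := by
  have hc : 0 < D * (D - 2 * δ) := mul_pos hD (by linarith)
  have he : 0 < (D - δ) ^ 2 := pow_pos (by linarith) 2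
  -- `t (D - δ)² = D (D - 2δ) / 2` makes the difference `t (t (D - δ)² - D (D - 2δ))` negative.
  refine ⟨D * (D - 2 * δ) / (2 * (D - δ) ^ 2), by positivity, ?_, ?_⟩
  · rw [div_lt_one (by positivity)]
    nlinarith [sq_nonneg (D - δ), sq_pos_of_pos hD]
  · set t := D * (D - 2 * δ) / (2 * (D - δ) ^ 2)
    have hte : t * (D - δ) ^ 2 = D * (D - 2 * δ) / 2 := by
      have : D - δ ≠ 0 := by linarith
      simp only [t]; field_simp
    have ht : 0 < t := by positivity
    nlinarith [mul_pos ht hc]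

lemma div_lt_div_of_lt_mul_of_mul_le {a b s J V : ℝ} (ha : 0 ≤ a) (hs : 0 < s) (hV : 0 < V)
    (hab : a < s * b) (hJ : s * V ≤ J) : a / J < b / V := by
  calc a / J ≤ a / (s * V) := div_le_div_of_nonneg_left ha (by positivity) hJ
    _ < s * b / (s * V) := div_lt_div_of_pos_right hab (by positivity)
    _ = b / V := mul_div_mul_left b V hs.ne'

theorem ids_almost_greedy_general (k : ℕ) (Δ I : Fin k → ℝ) (hI : ∀ x, 0 ≤ I x)
    (δ : ℝ) (hδ : 0 < δ) (xstar : Fin k) (hstar : Δ xstar = δ)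
    (Ψ : (Fin k → ℝ) → ℝ)
    (hΨ : ∀ ν, Ψ ν = (∑ x, ν x * Δ x) ^ 2 / (∑ x, ν x * I x))
    (μstar : Fin k → ℝ) (hpos : ∀ x, 0 ≤ μstar x) (hsum : (∑ x, μstar x) = 1)
    (hIpos : 0 < ∑ x, μstar x * I x)
    (hmin : ∀ ν : Fin k → ℝ, (∀ x, 0 ≤ ν x) → (∑ x, ν x) = 1 →
      0 < (∑ x, ν x * I x) → Ψ μstar ≤ Ψ ν) :
    ∑ x, μstar x * Δ x ≤ 2 * δ := by
  by_contra! hgap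
  obtain ⟨t, ht₀, ht₁, hlerp⟩ := exists_sq_lerp_lt (by linarith) hgap
  set ν := mixSingle t μstar xstar
  have hνI : (1 - t) * ∑ x, μstar x * I x ≤ ∑ x, ν x * I x := by
    rw [sum_mixSingle_mul]
    nlinarith [hI xstar]
  have hνΔ : ∑ x, ν x * Δ x = (1 - t) * ∑ x, μstar x * Δ x + t * δ := by
    rw [sum_mixSingle_mul, hstar]
  have hdrop : Ψ ν < Ψ μstar := by
    rw [hΨ, hΨ, hνΔ]
    exact div_lt_div_of_lt_mul_of_mul_le (sq_nonneg _) (by linarith) hIpos hlerp hνI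
  refine hdrop.not_ge (hmin ν (mixSingle_nonneg ht₀.le ht₁.le hpos xstar) ?_ ?_)
  · rw [sum_mixSingle, hsum]; ring
  · nlinarith

theorem ids_almost_greedy (k : ℕ) (Δ I : Fin k → ℝ) (hI : ∀ x, 0 ≤ I x)
    (δ : ℝ) (hδ : 0 < δ) (xstar : Fin k) (hstar : Δ xstar = δ)
    (hΔ : ∀ x, δ ≤ Δ x)
    (Ψ : (Fin k → ℝ) → ℝ)
    (hΨ : ∀ ν, Ψ ν = (∑ x, ν x * Δ x) ^ 2 / (∑ x, ν x * I x))
    (μstar : Fin k → ℝ) (hpos : ∀ x, 0 ≤ μstar x) (hsum : (∑ x, μstar x) = 1)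
    (hIpos : 0 < ∑ x, μstar x * I x)
    (hmin : ∀ ν : Fin k → ℝ, (∀ x, 0 ≤ ν x) → (∑ x, ν x) = 1 →
      0 < (∑ x, ν x * I x) → Ψ μstar ≤ Ψ ν) :
    ∑ x, μstar x * Δ x ≤ 2 * δ :=
  ids_almost_greedy_general k Δ I hI δ hδ xstar hstar Ψ hΨ μstar hpos hsum hIpos hmin
end

section
/- Let $\theta^*, \hat\theta \in \mathbb{R}^d$, $V$ positive definite with $\|\hat\theta - \theta^*\|_V^2 \leq \beta$, and let $\mathcal{X} \subset \mathbb{R}^d$ be finite with $x^* = \arg\max_x \langle x, \theta^*\rangle$. Define $\hat\Delta(x) = \max_{z\in\mathcal{X}}\big(\langle z, \hat\theta\rangle + \beta^{1/2}\|z\|_{V^{-1}}\big) - \langle x, \hat\theta\rangle$ and $\Delta(x) = \langle x^* - x, \theta^*\rangle$. Then $\Delta(x) \leq 2\hat\Delta(x)$ for all $x \in \mathcal{X}$. -/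
open Matrix

/-!
If `‖θ̂ - θ*‖²_V ≤ β`, Cauchy–Schwarz in the inner product `V⁻¹` gives
`|⟨z, θ̂ - θ*⟩| ≤ √β ‖z‖_{V⁻¹}` for every `z`: the optimistic index `⟨z, θ̂⟩ + √β ‖z‖_{V⁻¹}`
overestimates `⟨z, θ*⟩`, and the pessimistic one `⟨z, θ̂⟩ - √β ‖z‖_{V⁻¹}` underestimates it.
Applying the first to `x*` and the second to `x`, and bounding both optimistic indices by their
maximum over `𝒳`, gives `Δ(x) ≤ 2 Δ̂(x)`.
-/

namespace Matrix

theorem PosSemidef.dotProduct_mulVec_sq_le {n R : Type*} [Fintype n] [DecidableEq n]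
    [CommRing R] [LinearOrder R] [IsStrictOrderedRing R] [StarRing R] [TrivialStar R]
    {M : Matrix n n R} (hM : M.PosSemidef) (x y : n → R) :
    (x ⬝ᵥ (M *ᵥ y)) ^ 2 ≤ (x ⬝ᵥ (M *ᵥ x)) * (y ⬝ᵥ (M *ᵥ y)) := by
  have hsymm : LinearMap.IsSymm M.toBilin' := LinearMap.BilinForm.isSymm_iff.mp <|
    isSymm_toBilin'_iff_isSymm.mpr (isHermitian_iff_isSymm.mp hM.isHermitian)
  have hnonneg (v : n → R) : 0 ≤ M.toBilin' v v := by
    simpa [toBilin'_apply'] using hM.dotProduct_mulVec_nonneg v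
  simpa only [toBilin'_apply'] using M.toBilin'.apply_sq_le_of_symm hnonneg hsymm x y

theorem PosDef.abs_dotProduct_le_sqrt_mul_sqrt {n : Type*} [Fintype n] [DecidableEq n]
    {V : Matrix n n ℝ} (hV : V.PosDef) (z w : n → ℝ) :
    |z ⬝ᵥ w| ≤ √(z ⬝ᵥ (V⁻¹ *ᵥ z)) * √(w ⬝ᵥ (V *ᵥ w)) := by
  have hVw : V⁻¹ *ᵥ (V *ᵥ w) = w := by
    rw [mulVec_mulVec, nonsing_inv_mul V ((isUnit_iff_isUnit_det V).mp hV.isUnit), one_mulVec]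
  have hcs := hV.inv.posSemidef.dotProduct_mulVec_sq_le z (V *ᵥ w)
  rw [hVw, dotProduct_comm (V *ᵥ w) w] at hcs
  have hz : 0 ≤ z ⬝ᵥ (V⁻¹ *ᵥ z) := by simpa using hV.inv.posSemidef.dotProduct_mulVec_nonneg z
  rw [← Real.sqrt_mul hz]
  exact Real.abs_le_sqrt hcs

theorem PosDef.abs_dotProduct_le_of_dotProduct_mulVec_le {n : Type*} [Fintype n] [DecidableEq n]
    {V : Matrix n n ℝ} (hV : V.PosDef) {w : n → ℝ} {β : ℝ} (hw : w ⬝ᵥ (V *ᵥ w) ≤ β)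
    (z : n → ℝ) : |z ⬝ᵥ w| ≤ √β * √(z ⬝ᵥ (V⁻¹ *ᵥ z)) := by
  rw [mul_comm]
  exact (hV.abs_dotProduct_le_sqrt_mul_sqrt z w).trans (by gcongr)

end Matrix

theorem gap_estimate_upper_bound_general (d : ℕ)
    (Xset : Finset (Fin d → ℝ)) (hXne : Xset.Nonempty)
    (θstar θhat : Fin d → ℝ)
    (V : Matrix (Fin d) (Fin d) ℝ) (hV : V.PosDef)
    (β : ℝ) (hβ : (θhat - θstar) ⬝ᵥ (V *ᵥ (θhat - θstar)) ≤ β)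
    (xstar : Fin d → ℝ) (hxs : xstar ∈ Xset)
    (Δhat : (Fin d → ℝ) → ℝ)
    (hΔhat : ∀ x, Δhat x =
      Xset.sup' hXne (fun z => θhat ⬝ᵥ z + Real.sqrt β * Real.sqrt (z ⬝ᵥ (V⁻¹ *ᵥ z)))
        - θhat ⬝ᵥ x) :
    ∀ x ∈ Xset, θstar ⬝ᵥ (xstar - x) ≤ 2 * Δhat x := by
  intro x hx
  have confidence (z : Fin d → ℝ) :
      |θhat ⬝ᵥ z - θstar ⬝ᵥ z| ≤ √β * √(z ⬝ᵥ (V⁻¹ *ᵥ z)) := by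
    rw [← sub_dotProduct, dotProduct_comm]
    exact hV.abs_dotProduct_le_of_dotProduct_mulVec_le hβ z
  have h_xstar := abs_le.mp (confidence xstar)
  have h_x := abs_le.mp (confidence x)
  rw [hΔhat x, dotProduct_sub]
  linarith [Xset.le_sup' (fun z => θhat ⬝ᵥ z + √β * √(z ⬝ᵥ (V⁻¹ *ᵥ z))) hxs,
    Xset.le_sup' (fun z => θhat ⬝ᵥ z + √β * √(z ⬝ᵥ (V⁻¹ *ᵥ z))) hx]

theorem gap_estimate_upper_bound (d : ℕ)
    (Xset : Finset (Fin d → ℝ)) (hXne : Xset.Nonempty)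
    (θstar θhat : Fin d → ℝ)
    (V : Matrix (Fin d) (Fin d) ℝ) (hV : V.PosDef)
    (β : ℝ) (hβ : (θhat - θstar) ⬝ᵥ (V *ᵥ (θhat - θstar)) ≤ β)
    (xstar : Fin d → ℝ) (hxs : xstar ∈ Xset)
    (hmax : ∀ x ∈ Xset, θstar ⬝ᵥ x ≤ θstar ⬝ᵥ xstar)
    (Δhat : (Fin d → ℝ) → ℝ)
    (hΔhat : ∀ x, Δhat x =
      Xset.sup' hXne (fun z => θhat ⬝ᵥ z + Real.sqrt β * Real.sqrt (z ⬝ᵥ (V⁻¹ *ᵥ z)))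
        - θhat ⬝ᵥ x) :
    ∀ x ∈ Xset, θstar ⬝ᵥ (xstar - x) ≤ 2 * Δhat x :=
  gap_estimate_upper_bound_general d Xset hXne θstar θhat V hV β hβ xstar hxs Δhat hΔhat
end
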